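/- arXiv:2108.07054 — 5 statements merged into one kernel-verified Lean document; each statement's English description precedes it below -/
import Mathlib

section
/- Let S be a multiset of m complex numbers. Then there exists a unique multiset T of m complex numbers such that ∏_{s ∈ S} (x − s) = (1/m) ∑_{t ∈ T} (x − t)^m as polynomials in ℂ[x]. -/
/-!
By the binomial theorem, the coefficient of `X ^ (m - k)` in `m⁻¹ • ∑ t ∈ T, (X - t) ^ m`
is `(-1) ^ k * m.choose k / m * p k`, where `p k` is the `k`-th power sum of `T`; for `k = 0`
this is `1`, matching the monic left-hand side. So the identity prescribes exactly the power
sums `p 1, …, p m` of `T`. In characteristic zero Newton's identities convert these into the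
elementary symmetric functions `e 1, …, e m`, i.e. into the monic polynomial
`∏ t ∈ T, (X - t)`, and over `ℂ` there is exactly one multiset of `m` roots for it.
-/

open Polynomial Finset

theorem Finset.Nat.sum_antidiagonal_filter_fst_lt {M : Type*} [AddCommMonoid M] (f : ℕ → ℕ → M)
    (n : ℕ) :
    ∑ a ∈ antidiagonal n with a.1 < n, f a.1 a.2 = ∑ i ∈ range n, f i (n - i) := by
  rw [sum_filter, Nat.sum_antidiagonal_eq_sum_range_succ (fun i j => if i < n then f i j else 0),
    sum_range_succ, if_neg (lt_irrefl n), add_zero]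
  exact sum_congr rfl fun i hi => if_pos (mem_range.mp hi)

namespace Multiset

variable {R : Type*} [CommRing R]

def psum (s : Multiset R) (k : ℕ) : R := (s.map (· ^ k)).sum

@[simp]
theorem psum_zero (s : Multiset R) : s.psum 0 = card s := by
  simp [psum]

theorem mul_esymm_eq_sum (s : Multiset R) (k : ℕ) :
    k * s.esymm k =
      (-1) ^ (k + 1) * ∑ i ∈ Finset.range k, (-1) ^ i * s.esymm i * s.psum (k - i) := by
  induction s using Quotient.inductionOn with
  | _ l =>
    have hl : (univ.val.map l.get : Multiset R) = l := by simp [Fin.univ_val_map]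
    have hpsum (j : ℕ) :
        MvPolynomial.aeval l.get (MvPolynomial.psum (Fin l.length) R j) = psum l j := by
      simp only [MvPolynomial.psum, map_sum, map_pow, MvPolynomial.aeval_X]
      rw [psum, ← hl, Multiset.map_map]
      rfl
    have key :=
      congrArg (MvPolynomial.aeval l.get) (MvPolynomial.mul_esymm_eq_sum (Fin l.length) R k)
    simp only [map_mul, map_sum, map_pow, map_natCast, map_neg, map_one,
      MvPolynomial.aeval_esymm_eq_multiset_esymm, hl, hpsum] at key
    rwa [Finset.Nat.sum_antidiagonal_filter_fst_lt
      (fun i j => (-1) ^ i * esymm (l : Multiset R) i * psum (l : Multiset R) j)] at key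

end Multiset

variable {K : Type*} [Field K]

/-- Newton's identities solved for `e k`: the elementary symmetric functions of any multiset whose
power sums are `p` (`Multiset.esymm_eq_newtonEsymm`). -/
def newtonEsymm (p : ℕ → K) : ℕ → K
  | 0 => 1
  | k + 1 => (-1) ^ k / (k + 1) *
      ∑ i : Fin (k + 1), (-1) ^ (i : ℕ) * newtonEsymm p i * p (k + 1 - i)

theorem newtonEsymm_zero (p : ℕ → K) : newtonEsymm p 0 = 1 := by
  rw [newtonEsymm]

theorem mul_newtonEsymm [CharZero K] (p : ℕ → K) {k : ℕ} (hk : 0 < k) :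
    k * newtonEsymm p k =
      (-1) ^ (k + 1) * ∑ i ∈ range k, (-1) ^ i * newtonEsymm p i * p (k - i) := by
  obtain ⟨k, rfl⟩ := Nat.exists_eq_add_of_lt hk
  rw [zero_add, newtonEsymm,
    Fin.sum_univ_eq_sum_range (fun i => (-1) ^ i * newtonEsymm p i * p (k + 1 - i))]
  field_simp
  push_cast
  ring

theorem newtonEsymm_congr {p q : ℕ → K} {k : ℕ} (h : ∀ i ∈ Icc 1 k, p i = q i) :
    newtonEsymm p k = newtonEsymm q k := by
  induction k using Nat.strong_induction_on with
  | _ k ih =>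
    cases k with
    | zero => simp only [newtonEsymm_zero]
    | succ k =>
      rw [newtonEsymm, newtonEsymm]
      congr 1
      refine sum_congr rfl fun i _ => ?_
      rw [ih i i.isLt fun j hj => h j (by simp at hj ⊢; omega), h (k + 1 - i) (by simp; omega)]

/-- The term `i = 0` of Newton's identity in degree `k` is `p k`; all others involve only
`p 1, …, p (k - 1)`. -/
theorem eq_of_newtonEsymm_eq [CharZero K] {p q : ℕ → K} {m : ℕ}
    (h : ∀ j ≤ m, newtonEsymm p j = newtonEsymm q j) : ∀ k ∈ Icc 1 m, p k = q k := by
  intro k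
  induction k using Nat.strong_induction_on with
  | _ k ih =>
    intro hk
    obtain ⟨hk1, hkm⟩ := mem_Icc.mp hk
    have hnewton := (mul_newtonEsymm p hk1).symm.trans ((h k hkm).symm ▸ mul_newtonEsymm q hk1)
    obtain ⟨n, rfl⟩ : ∃ n, k = n + 1 := ⟨k - 1, by omega⟩
    have hhigher : ∀ i ∈ range n,
        (-1) ^ (i + 1) * newtonEsymm p (i + 1) * p (n + 1 - (i + 1)) =
          (-1) ^ (i + 1) * newtonEsymm q (i + 1) * q (n + 1 - (i + 1)) := fun i hi => by
      have hin := mem_range.mp hi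
      rw [h (i + 1) (by omega),
        ih (n + 1 - (i + 1)) (by omega) (mem_Icc.mpr ⟨by omega, by omega⟩)]
    rw [mul_right_inj' (pow_ne_zero _ (neg_ne_zero.mpr one_ne_zero)), sum_range_succ',
      sum_range_succ', sum_congr rfl hhigher] at hnewton
    simpa [newtonEsymm_zero] using hnewton

namespace Multiset

theorem esymm_eq_newtonEsymm [CharZero K] (s : Multiset K) (k : ℕ) :
    s.esymm k = newtonEsymm s.psum k := by
  induction k using Nat.strong_induction_on with
  | _ k ih =>
    rcases k.eq_zero_or_pos with rfl | hk
    · simp [newtonEsymm_zero, esymm]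
    refine mul_left_cancel₀ (Nat.cast_ne_zero.mpr hk.ne') ?_
    rw [mul_esymm_eq_sum, mul_newtonEsymm _ hk]
    exact congrArg _ (sum_congr rfl fun i hi => by rw [ih i (mem_range.mp hi)])

end Multiset

theorem Polynomial.exists_monic_natDegree_eq_coeff_eq {R : Type*} [CommRing R] [Nontrivial R]
    (m : ℕ) (c : ℕ → R) : ∃ Q : R[X], Q.Monic ∧ Q.natDegree = m ∧ ∀ i < m, Q.coeff i = c i := by
  have hlow := degree_sum_fin_lt fun i : Fin m => c i
  refine ⟨X ^ m + ∑ i : Fin m, C (c i) * X ^ (i : ℕ), monic_X_pow_add hlow, ?_, fun i hi => ?_⟩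
  · rw [natDegree_add_eq_left_of_degree_lt (by simpa using hlow), natDegree_X_pow]
  · simp only [coeff_add, coeff_X_pow, if_neg hi.ne, zero_add, finsetSum_coeff, coeff_C_mul_X_pow]
    rw [Fin.sum_univ_eq_sum_range (fun j => if i = j then c j else 0), sum_ite_eq,
      if_pos (mem_range.mpr hi)]

namespace Multiset

theorem exists_card_eq_esymm_eq [IsAlgClosed K] (m : ℕ) {e : ℕ → K} (he : e 0 = 1) :
    ∃ s : Multiset K, card s = m ∧ ∀ j ≤ m, s.esymm j = e j := by
  obtain ⟨Q, hQ, hdeg, hcoeff⟩ :=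
    exists_monic_natDegree_eq_coeff_eq m fun i => (-1) ^ (m - i) * e (m - i)
  have hroots : card Q.roots = Q.natDegree := IsAlgClosed.card_roots_eq_natDegree
  refine ⟨Q.roots, hroots.trans hdeg, fun j hj => ?_⟩
  rcases j.eq_zero_or_pos with rfl | hj0
  · simp [he, esymm]
  have hvieta := coeff_eq_esymm_roots_of_card hroots (hdeg.symm ▸ Nat.sub_le m j)
  rw [hcoeff _ (by omega), hQ.leadingCoeff, hdeg, Nat.sub_sub_self hj, one_mul] at hvieta
  exact (mul_left_cancel₀ (pow_ne_zero _ (neg_ne_zero.mpr one_ne_zero)) hvieta).symm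

theorem eq_of_card_eq_of_psum_eq [CharZero K] {s t : Multiset K} {m : ℕ} (hs : card s = m)
    (ht : card t = m) (h : ∀ k ∈ Icc 1 m, s.psum k = t.psum k) : s = t := by
  have hesymm : ∀ j ≤ m, s.esymm j = t.esymm j := fun j hj => by
    rw [esymm_eq_newtonEsymm, esymm_eq_newtonEsymm]
    exact newtonEsymm_congr fun i hi => h i (Icc_subset_Icc_right hj hi)
  have hprod : (s.map fun a => X - C a).prod = (t.map fun a => X - C a).prod := by
    rw [prod_X_sub_X_eq_sum_esymm, prod_X_sub_X_eq_sum_esymm, hs, ht]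
    exact sum_congr rfl fun j hj => by rw [hesymm j (Nat.lt_succ_iff.mp (mem_range.mp hj))]
  simpa using congrArg roots hprod

theorem exists_card_eq_psum_eq [CharZero K] [IsAlgClosed K] (m : ℕ) (q : ℕ → K) :
    ∃ s : Multiset K, card s = m ∧ ∀ k ∈ Icc 1 m, s.psum k = q k := by
  obtain ⟨s, hs, hesymm⟩ := exists_card_eq_esymm_eq m (newtonEsymm_zero q)
  exact ⟨s, hs, eq_of_newtonEsymm_eq fun j hj => by rw [← esymm_eq_newtonEsymm, hesymm j hj]⟩

end Multiset

namespace Polynomial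

theorem coeff_multiset_sum_X_sub_C_pow {R : Type*} [CommRing R] (s : Multiset R) (m j : ℕ) :
    (s.map fun t => (X - C t) ^ m).sum.coeff j = m.choose j * (-1) ^ (m - j) * s.psum (m - j) := by
  have hterm (t : R) : ((X - C t) ^ m).coeff j = m.choose j * (-1) ^ (m - j) * t ^ (m - j) := by
    rw [sub_eq_add_neg, ← C_neg, coeff_X_add_C_pow, neg_pow]
    ring
  rw [← lcoeff_apply, map_multiset_sum, Multiset.map_map]
  simp only [Function.comp_def, lcoeff_apply, hterm, Multiset.psum, Multiset.sum_map_mul_left]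

theorem eq_inv_smul_multiset_sum_X_sub_C_pow_iff [CharZero K] {m : ℕ} (hm : 0 < m) {P : K[X]}
    (hP : P.Monic) (hdeg : P.natDegree = m) {s : Multiset K} (hs : Multiset.card s = m) :
    P = (m : K)⁻¹ • (s.map fun t => (X - C t) ^ m).sum ↔
      ∀ k ∈ Icc 1 m, s.psum k = (-1) ^ k * m * (m.choose k : K)⁻¹ * P.coeff (m - k) := by
  have hm0 : (m : K) ≠ 0 := Nat.cast_ne_zero.mpr hm.ne'
  simp only [Polynomial.ext_iff, coeff_smul, smul_eq_mul, coeff_multiset_sum_X_sub_C_pow]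
  have hhigh : ∀ j, m ≤ j →
      P.coeff j = (m : K)⁻¹ * (m.choose j * (-1) ^ (m - j) * s.psum (m - j)) := fun j hj => by
    rcases hj.eq_or_lt with rfl | hj
    · rw [← hdeg, hP.coeff_natDegree, hdeg]
      simp [hs, hm0]
    · simp [coeff_eq_zero_of_natDegree_lt (hdeg ▸ hj), Nat.choose_eq_zero_of_lt hj]
  have hlow : ∀ k ∈ Icc 1 m, P.coeff (m - k) =
        (m : K)⁻¹ * (m.choose (m - k) * (-1) ^ (m - (m - k)) * s.psum (m - (m - k))) ↔
      s.psum k = (-1) ^ k * m * (m.choose k : K)⁻¹ * P.coeff (m - k) := fun k hk => by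
    have hkm := (mem_Icc.mp hk).2
    have hch : (m.choose k : K) ≠ 0 := Nat.cast_ne_zero.mpr (Nat.choose_pos hkm).ne'
    have hsign : (-1 : K) ^ k * (-1) ^ k = 1 := by rw [← mul_pow]; simp
    rw [Nat.sub_sub_self hkm, Nat.choose_symm hkm]
    constructor <;> intro h <;> rw [h] <;> field_simp
    · linear_combination -s.psum k * hsign
    · linear_combination -P.coeff (m - k) * hsign
  refine ⟨fun h k hk => (hlow k hk).mp (h (m - k)), fun h j => ?_⟩
  rcases le_or_gt m j with hj | hj
  · exact hhigh j hj
  · have hk : m - j ∈ Icc 1 m := mem_Icc.mpr ⟨by omega, by omega⟩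
    simpa only [Nat.sub_sub_self hj.le] using (hlow (m - j) hk).mpr (h (m - j) hk)

end Polynomial

/-- **Existence and uniqueness of the U transform.**
Given a multiset `S` of `m` complex numbers, there is a unique multiset `T` of `m`
complex numbers such that `∏_{s ∈ S} (X - s) = (1/m) ∑_{t ∈ T} (X - t)^m`
as polynomials in `ℂ[X]`. -/
theorem u_transform_exists_unique (m : ℕ) (hm : 0 < m) (S : Multiset ℂ)
    (hS : Multiset.card S = m) :
    ∃! T : Multiset ℂ, Multiset.card T = m ∧
      (S.map fun s => (X : ℂ[X]) - C s).prod =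
        (m : ℂ)⁻¹ • (T.map fun t => ((X : ℂ[X]) - C t) ^ m).sum := by
  set P := (S.map fun s => (X : ℂ[X]) - C s).prod
  have hP : P.Monic := monic_multiset_prod_of_monic _ _ fun s _ => monic_X_sub_C s
  have hdeg : P.natDegree = m := by rw [natDegree_multiset_prod_X_sub_C_eq_card, hS]
  set q : ℕ → ℂ := fun k => (-1) ^ k * m * (m.choose k : ℂ)⁻¹ * P.coeff (m - k)
  have hiff (T : Multiset ℂ) :
      Multiset.card T = m ∧ P = (m : ℂ)⁻¹ • (T.map fun t => (X - C t) ^ m).sum ↔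
        Multiset.card T = m ∧ ∀ k ∈ Icc 1 m, T.psum k = q k :=
    and_congr_right fun hT => eq_inv_smul_multiset_sum_X_sub_C_pow_iff hm hP hdeg hT
  rw [existsUnique_congr hiff]
  obtain ⟨T, hT, hTq⟩ := Multiset.exists_card_eq_psum_eq m q
  exact ⟨T, ⟨hT, hTq⟩, fun T' ⟨hT', hT'q⟩ =>
    Multiset.eq_of_card_eq_of_psum_eq hT' hT fun k hk => (hT'q k hk).trans (hTq k hk).symm⟩
end

section
/- Let S be a multiset of m real numbers and let T be its U transform (a multiset of m complex numbers). Then for every nonnegative integer k, the power sum ∑_{t ∈ T} t^k is a real number. -/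
/-!
The polynomial `∑_{t ∈ T} (X - t)^m = m ∏_{s ∈ S} (X - s)` has real coefficients, and its
coefficient of `X^(m-j)` is `(-1)^j (m choose j) p_j(T)`, where `p_j` is the `j`-th power sum.
Hence the conjugate multiset `T̄` has the same power sums `p_j` as `T` for `j ≤ m`. By Newton's
identities the first `m` power sums of `m` numbers determine all the others, so
`conj p_k(T) = p_k(T̄) = p_k(T)` for every `k`.
-/

open Polynomial Finset

namespace MvPolynomial

variable {σ K : Type*} [Fintype σ] [Field K] [CharZero K]

theorem esymm_eq_zero_of_card_lt (R : Type*) [CommSemiring R] {k : ℕ}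
    (hk : Fintype.card σ < k) : esymm σ R k = 0 := by
  rw [esymm, powersetCard_eq_empty.2 (by simpa using hk), sum_empty]

variable {f g : σ → K}

theorem eval_esymm_eq_of_forall_le_card
    (h : ∀ j ≤ Fintype.card σ, eval f (psum σ K j) = eval g (psum σ K j)) (k : ℕ) :
    eval f (esymm σ K k) = eval g (esymm σ K k) := by
  induction k using Nat.strong_induction_on with
  | _ k ih =>
  rcases lt_or_ge (Fintype.card σ) k with hk | hk
  · simp [esymm_eq_zero_of_card_lt K hk]
  rcases Nat.eq_zero_or_pos k with rfl | hk₀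
  · simp
  have newton (x : σ → K) : (k : K) * eval x (esymm σ K k) = (-1) ^ (k + 1) *
      ∑ a ∈ antidiagonal k with a.1 < k,
        (-1) ^ a.1 * eval x (esymm σ K a.1) * eval x (psum σ K a.2) := by
    simpa using congrArg (eval x) (mul_esymm_eq_sum σ K k)
  refine mul_left_cancel₀ (Nat.cast_ne_zero.2 hk₀.ne') ?_
  rw [newton f, newton g]
  congr 1
  refine sum_congr rfl fun a ha => ?_
  rw [mem_filter, HasAntidiagonal.mem_antidiagonal] at ha
  rw [ih a.1 ha.2, h a.2 (by omega)]

theorem eval_psum_eq_of_forall_le_card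
    (h : ∀ j ≤ Fintype.card σ, eval f (psum σ K j) = eval g (psum σ K j)) (k : ℕ) :
    eval f (psum σ K k) = eval g (psum σ K k) := by
  induction k using Nat.strong_induction_on with
  | _ k ih =>
  rcases le_or_gt k (Fintype.card σ) with hk | hk
  · exact h k hk
  have newton (x : σ → K) : eval x (psum σ K k) = (-1) ^ (k + 1) * k * eval x (esymm σ K k) -
      ∑ a ∈ antidiagonal k with a.1 ∈ Set.Ioo 0 k,
        (-1) ^ a.1 * eval x (esymm σ K a.1) * eval x (psum σ K a.2) := by
    simpa using congrArg (eval x) (psum_eq_mul_esymm_sub_sum σ K k (by omega))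
  rw [newton f, newton g, eval_esymm_eq_of_forall_le_card h]
  congr 1
  refine sum_congr rfl fun a ha => ?_
  rw [mem_filter, HasAntidiagonal.mem_antidiagonal, Set.mem_Ioo] at ha
  rw [eval_esymm_eq_of_forall_le_card h, ih a.2 (by omega)]

end MvPolynomial

theorem Polynomial.coeff_sum_X_sub_C_pow {R : Type*} [CommRing R] (T : Multiset R) {m j : ℕ}
    (hj : j ≤ m) : (T.map fun t => (X - C t) ^ m).sum.coeff (m - j) =
      (-1) ^ j * m.choose j * (T.map (· ^ j)).sum := by
  have hcoeff (t : R) : ((X - C t) ^ m).coeff (m - j) = (-1) ^ j * m.choose j * t ^ j := by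
    rw [sub_eq_add_neg, ← C_neg, coeff_X_add_C_pow, Nat.sub_sub_self hj, Nat.choose_symm hj,
      neg_pow]
    ring
  rw [← lcoeff_apply, map_multiset_sum, Multiset.map_map]
  simp [Function.comp_def, hcoeff, Multiset.sum_map_mul_left]

namespace Multiset

theorem exists_univ_map_eq_of_card_eq {α : Type*} (s : Multiset α) {n : ℕ}
    (hn : card s = n) : ∃ f : Fin n → α, (univ : Finset (Fin n)).val.map f = s := by
  subst hn
  induction s using Quotient.inductionOn with
  | h l => exact ⟨fun i => l.get (i.cast (by simp)), by
      rw [Fin.univ_val_map]; exact congrArg _ (List.ext_get (by simp) (by simp))⟩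

variable {K : Type*} [Field K] [CharZero K]

theorem sum_map_pow_eq_of_forall_le_card {A B : Multiset K} {n : ℕ} (hA : card A = n)
    (hB : card B = n) (h : ∀ j ≤ n, (A.map (· ^ j)).sum = (B.map (· ^ j)).sum) (k : ℕ) :
    (A.map (· ^ k)).sum = (B.map (· ^ k)).sum := by
  obtain ⟨f, rfl⟩ := A.exists_univ_map_eq_of_card_eq hA
  obtain ⟨g, rfl⟩ := B.exists_univ_map_eq_of_card_eq hB
  have hpsum (x : Fin n → K) (j : ℕ) :
      ((univ.val.map x).map (· ^ j)).sum =
        MvPolynomial.eval x (MvPolynomial.psum (Fin n) K j) := by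
    simp only [MvPolynomial.psum, map_sum, map_pow, MvPolynomial.eval_X]
    rw [Finset.sum_eq_multiset_sum, Multiset.map_map]
    rfl
  rw [hpsum, hpsum]
  refine MvPolynomial.eval_psum_eq_of_forall_le_card (fun j hj => ?_) k
  rw [← hpsum, ← hpsum]
  exact h j (by simpa using hj)

theorem sum_map_pow_eq_of_sum_map_X_sub_C_pow_eq {A B : Multiset K} {m : ℕ} (hA : card A = m)
    (hB : card B = m)
    (h : (A.map fun t => (X - C t) ^ m).sum = (B.map fun t => (X - C t) ^ m).sum) (k : ℕ) :
    (A.map (· ^ k)).sum = (B.map (· ^ k)).sum := by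
  refine sum_map_pow_eq_of_forall_le_card hA hB (fun j hj => ?_) k
  have hc : ((-1) ^ j * m.choose j : K) ≠ 0 :=
    mul_ne_zero (pow_ne_zero _ (by norm_num)) (Nat.cast_ne_zero.2 (Nat.choose_pos hj).ne')
  have := congrArg (coeff · (m - j)) h
  simp only [coeff_sum_X_sub_C_pow _ hj] at this
  exact mul_left_cancel₀ hc this

end Multiset

theorem u_transform_power_sums_real_general (m : ℕ) (S : Multiset ℝ) (T : Multiset ℂ)
    (hT : Multiset.card T = m)
    (hU : (S.map fun s => (X : ℂ[X]) - C (s : ℂ)).prod =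
        (m : ℂ)⁻¹ • (T.map fun t => ((X : ℂ[X]) - C t) ^ m).sum) :
    ∀ k : ℕ, ∃ r : ℝ, (T.map fun t => t ^ k).sum = (r : ℂ) := by
  intro k
  rcases eq_or_ne m 0 with rfl | hm
  · exact ⟨0, by simp [Multiset.card_eq_zero.mp hT]⟩
  have hreal : (S.map fun s => (X : ℂ[X]) - C (s : ℂ)).prod.map (starRingEnd ℂ) =
      (S.map fun s => (X : ℂ[X]) - C (s : ℂ)).prod := by
    simp [Polynomial.map_multiset_prod, Multiset.map_map]
  have hconj : ((T.map (starRingEnd ℂ)).map fun t => (X - C t) ^ m).sum =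
      (T.map fun t => (X - C t) ^ m).sum := by
    have := congrArg (Polynomial.map (starRingEnd ℂ)) hU
    rw [hreal, hU, Polynomial.map_smul, ← coe_mapRingHom, map_multiset_sum] at this
    simpa [Multiset.map_map, Function.comp_def, hm] using this.symm
  have hk := Multiset.sum_map_pow_eq_of_sum_map_X_sub_C_pow_eq (by simpa using hT) hT hconj k
  exact Complex.conj_eq_iff_real.mp (by simpa [map_multiset_sum, Multiset.map_map] using hk)

/-- **Power sums of the U transform of a real multiset are real.**
If `S` is a multiset of `m` real numbers and `T` is its U transform (the multiset of `m`
complex numbers with `∏_{s ∈ S}(X - s) = (1/m) ∑_{t ∈ T}(X - t)^m`), then for every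
nonnegative integer `k` the power sum `∑_{t ∈ T} t^k` is a real number. -/
theorem u_transform_power_sums_real (m : ℕ) (S : Multiset ℝ) (T : Multiset ℂ)
    (hS : Multiset.card S = m) (hT : Multiset.card T = m)
    (hU : (S.map fun s => (X : ℂ[X]) - C (s : ℂ)).prod =
        (m : ℂ)⁻¹ • (T.map fun t => ((X : ℂ[X]) - C t) ^ m).sum) :
    ∀ k : ℕ, ∃ r : ℝ, (T.map fun t => t ^ k).sum = (r : ℂ) :=
  u_transform_power_sums_real_general m S T hT hU
end

section
/- Let p and q be monic complex polynomials of degree m, and let S = {s_1, …, s_m} and T = {t_1, …, t_m} be the U transforms of the multisets of roots of p and of q, respectively. Then [p ⊞_m q](x) = (1/m²) ∑_{i=1}^m ∑_{j=1}^m (x − s_i − t_j)^m as polynomials in x. -/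
/-!
The convolution `⊞_m` is bilinear, and on pure `m`-th powers it is translation:
`(x - s)^m ⊞_m (x - t)^m = (x - s - t)^m`, because the factors `m!/i!` and `m!/(m-i)!`
produced by differentiating the two powers combine with `1/m!` into the binomial coefficients
of `((x - s) - t)^m`. A monic complex polynomial splits, so the U transform hypothesis reads
`p = (1/m) ∑_{s ∈ S} (x - s)^m`, and likewise for `q`; expanding `p ⊞_m q` bilinearly gives
the double sum.
-/

open Polynomial

/-- The symmetric additive convolution of two polynomials of degree (at most) `m`:
`[p ⊞_m q](x) = (1/m!) ∑_{i=0}^m p^{(i)}(x) · q^{(m-i)}(0)`. -/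
noncomputable def boxplus (m : ℕ) (p q : ℂ[X]) : ℂ[X] :=
  (m.factorial : ℂ)⁻¹ •
    ∑ i ∈ Finset.range (m + 1),
      C ((Polynomial.derivative^[m - i] q).eval 0) * Polynomial.derivative^[i] p

section Bilinear

variable (m : ℕ)

lemma boxplus_zero_left (q : ℂ[X]) : boxplus m 0 q = 0 := by
  simp [boxplus]

lemma boxplus_zero_right (p : ℂ[X]) : boxplus m p 0 = 0 := by
  simp [boxplus]

lemma boxplus_add_left (p₁ p₂ q : ℂ[X]) :
    boxplus m (p₁ + p₂) q = boxplus m p₁ q + boxplus m p₂ q := by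
  simp [boxplus, iterate_map_add, mul_add, Finset.sum_add_distrib, smul_add]

lemma boxplus_add_right (p q₁ q₂ : ℂ[X]) :
    boxplus m p (q₁ + q₂) = boxplus m p q₁ + boxplus m p q₂ := by
  simp [boxplus, iterate_map_add, add_mul, Finset.sum_add_distrib, smul_add]

lemma boxplus_smul_left (c : ℂ) (p q : ℂ[X]) :
    boxplus m (c • p) q = c • boxplus m p q := by
  simp only [boxplus, iterate_derivative_smul, Finset.smul_sum, mul_smul_comm, smul_comm c]

lemma boxplus_smul_right (c : ℂ) (p q : ℂ[X]) :
    boxplus m p (c • q) = c • boxplus m p q := by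
  simp only [boxplus, iterate_derivative_smul, eval_smul, smul_eq_mul, map_mul, Finset.smul_sum,
    smul_smul]
  refine Finset.sum_congr rfl fun i _ => ?_
  rw [smul_eq_C_mul, smul_eq_C_mul, map_mul]
  ring

lemma boxplus_multiset_sum_left (f : ℂ → ℂ[X]) (S : Multiset ℂ) (q : ℂ[X]) :
    boxplus m (S.map f).sum q = (S.map fun s => boxplus m (f s) q).sum := by
  induction S using Multiset.induction with
  | empty => simp [boxplus_zero_left]
  | cons a S ih => simp [boxplus_add_left, ih]

lemma boxplus_multiset_sum_right (g : ℂ → ℂ[X]) (T : Multiset ℂ) (p : ℂ[X]) :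
    boxplus m p (T.map g).sum = (T.map fun t => boxplus m p (g t)).sum := by
  induction T using Multiset.induction with
  | empty => simp [boxplus_zero_right]
  | cons a T ih => simp [boxplus_add_right, ih]

end Bilinear

theorem Nat.descFactorial_sub_mul_descFactorial {m i : ℕ} (hi : i ≤ m) :
    m.descFactorial (m - i) * m.descFactorial i = m.factorial * m.choose i := by
  rw [Nat.descFactorial_eq_factorial_mul_choose, Nat.choose_symm hi, mul_right_comm,
    Nat.factorial_mul_descFactorial hi]

lemma boxplus_X_sub_C_pow (m : ℕ) (s t : ℂ) :
    boxplus m ((X - C s) ^ m) ((X - C t) ^ m) = (X - C s - C t) ^ m := by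
  have binomial : (X - C s - C t) ^ m =
      ∑ i ∈ Finset.range (m + 1), C ((-t) ^ i * m.choose i) * (X - C s) ^ (m - i) := by
    rw [show X - C s - C t = C (-t) + (X - C s) by simp only [map_neg]; ring, add_pow]
    refine Finset.sum_congr rfl fun i _ => ?_
    simp only [map_mul, map_pow, map_natCast]
    ring
  rw [binomial, boxplus, Finset.smul_sum]
  refine Finset.sum_congr rfl fun i hi => ?_
  have hi : i ≤ m := Nat.lt_succ_iff.mp (Finset.mem_range.mp hi)
  have coeff : (m.factorial : ℂ)⁻¹ * (m.descFactorial (m - i) * (-t) ^ i * m.descFactorial i) =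
      (-t) ^ i * m.choose i := by
    rw [mul_right_comm _ ((-t) ^ i), ← Nat.cast_mul, Nat.descFactorial_sub_mul_descFactorial hi]
    push_cast
    field_simp [Nat.factorial_ne_zero]
  rw [iterate_derivative_X_sub_pow, iterate_derivative_X_sub_pow, Nat.sub_sub_self hi, ← coeff,
    eval_smul]
  simp only [eval_pow, eval_sub, eval_X, eval_C, zero_sub, nsmul_eq_mul, smul_eq_C_mul, map_mul,
    map_natCast]
  ring

theorem boxplus_eq_u_transform_sum_general (m : ℕ) (p q : ℂ[X])
    (hp : p.Monic) (hq : q.Monic)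
    (S T : Multiset ℂ)
    (hUS : (p.roots.map fun r => (X : ℂ[X]) - C r).prod =
        (m : ℂ)⁻¹ • (S.map fun s => ((X : ℂ[X]) - C s) ^ m).sum)
    (hUT : (q.roots.map fun r => (X : ℂ[X]) - C r).prod =
        (m : ℂ)⁻¹ • (T.map fun t => ((X : ℂ[X]) - C t) ^ m).sum) :
    boxplus m p q =
      ((m : ℂ) ^ 2)⁻¹ •
        (S.map fun s => (T.map fun t => ((X : ℂ[X]) - C s - C t) ^ m).sum).sum := by
  have hpS := ((IsAlgClosed.splits p).eq_prod_roots_of_monic hp).trans hUS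
  have hqT := ((IsAlgClosed.splits q).eq_prod_roots_of_monic hq).trans hUT
  rw [hpS, hqT, boxplus_smul_left, boxplus_smul_right, boxplus_multiset_sum_left]
  simp only [boxplus_multiset_sum_right, boxplus_X_sub_C_pow, smul_smul, ← sq, inv_pow]

/-- **Additive convolution via the U transform.**
If `p`, `q` are monic complex polynomials of degree `m` and `S`, `T` are the U transforms
of their root multisets, then `[p ⊞_m q](x) = (1/m²) ∑_{s ∈ S} ∑_{t ∈ T} (x - s - t)^m`. -/
theorem boxplus_eq_u_transform_sum (m : ℕ) (p q : ℂ[X])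
    (hp : p.Monic) (hq : q.Monic) (hpd : p.natDegree = m) (hqd : q.natDegree = m)
    (S T : Multiset ℂ) (hS : Multiset.card S = m) (hT : Multiset.card T = m)
    (hUS : (p.roots.map fun r => (X : ℂ[X]) - C r).prod =
        (m : ℂ)⁻¹ • (S.map fun s => ((X : ℂ[X]) - C s) ^ m).sum)
    (hUT : (q.roots.map fun r => (X : ℂ[X]) - C r).prod =
        (m : ℂ)⁻¹ • (T.map fun t => ((X : ℂ[X]) - C t) ^ m).sum) :
    boxplus m p q =
      ((m : ℂ) ^ 2)⁻¹ •
        (S.map fun s => (T.map fun t => ((X : ℂ[X]) - C s - C t) ^ m).sum).sum :=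
  boxplus_eq_u_transform_sum_general m p q hp hq S T hUS hUT
end

section
/- Let p and q be monic complex polynomials of degree m, and let S = {s_1, …, s_m} and T = {t_1, …, t_m} be the U transforms of the multisets of roots of p and of q, respectively. Then [p ⊠_m q](x) = (1/m²) ∑_{i=1}^m ∑_{j=1}^m (x − s_i t_j)^m as polynomials in x. -/
/-! The coefficient of `x^n` in `(1/m) ∑_{s ∈ S} (x - s)^m` is `(-1)^k C(m,n) p_k(S) / m`, where
`k = m - n` and `p_k` is the `k`-th power sum. As `p` is the product of its linear factors, this
gives the coefficients of `p` in terms of the power sums of `S`, and likewise for `q`. The double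
sum is a sum of the same shape over the multiset `{s t}`, whose power sums are `p_k(S) p_k(T)`;
since `⊠_m` multiplies the coefficients of `x^n` and divides by `C(m,n)`, the two sides agree. -/

open Polynomial

/-- The symmetric multiplicative convolution of two degree-`m` polynomials
`p(x) = ∑ (-1)^i p_i x^{m-i}`, `q(x) = ∑ (-1)^i q_i x^{m-i}`:
`[p ⊠_m q](x) = ∑_{i=0}^m x^{m-i} (-1)^i p_i q_i / C(m,i)`.
(Here `p_i = (-1)^i · coeff p (m-i)`, so the `i`-th term is
`(-1)^i · coeff p (m-i) · coeff q (m-i) / C(m,i) · x^{m-i}`.) -/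
noncomputable def boxtimes (m : ℕ) (p q : ℂ[X]) : ℂ[X] :=
  ∑ i ∈ Finset.range (m + 1),
    C ((-1 : ℂ) ^ i * p.coeff (m - i) * q.coeff (m - i) / (m.choose i : ℂ)) *
      (X : ℂ[X]) ^ (m - i)

theorem Polynomial.coeff_multiset_map_sum {R ι : Type*} [Semiring R] (S : Multiset ι)
    (f : ι → R[X]) (n : ℕ) :
    (S.map f).sum.coeff n = (S.map fun i => (f i).coeff n).sum := by
  rw [← lcoeff_apply, map_multiset_sum, Multiset.map_map]
  rfl

theorem Polynomial.coeff_multiset_sum_X_sub_C_pow_s4 {R : Type*} [CommRing R] (S : Multiset R)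
    (m n : ℕ) :
    (S.map fun s => ((X : R[X]) - C s) ^ m).sum.coeff n =
      (-1) ^ (m - n) * m.choose n * (S.map (· ^ (m - n))).sum := by
  rw [coeff_multiset_map_sum, ← Multiset.sum_map_mul_left]
  refine congrArg Multiset.sum (Multiset.map_congr rfl fun s _ => ?_)
  rw [sub_eq_add_neg, ← C_neg, coeff_X_add_C_pow, neg_pow]
  ring

theorem Multiset.sum_map_pow_bind_map_mul {R : Type*} [CommSemiring R] (S T : Multiset R)
    (k : ℕ) :
    ((S.bind fun s => T.map (s * ·)).map (· ^ k)).sum =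
      (S.map (· ^ k)).sum * (T.map (· ^ k)).sum := by
  simp only [Multiset.map_bind, Multiset.sum_bind, Multiset.map_map, Function.comp_def, mul_pow,
    Multiset.sum_map_mul_left, Multiset.sum_map_mul_right]

theorem coeff_boxtimes (m : ℕ) (p q : ℂ[X]) (n : ℕ) :
    (boxtimes m p q).coeff n =
      if n ≤ m then (-1) ^ (m - n) * p.coeff n * q.coeff n / m.choose n else 0 := by
  have reflected : boxtimes m p q = ∑ j ∈ Finset.range (m + 1),
      C ((-1) ^ (m - j) * p.coeff j * q.coeff j / m.choose j) * X ^ j := by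
    rw [boxtimes, ← Finset.sum_range_reflect]
    refine Finset.sum_congr rfl fun j hj => ?_
    have hj : j ≤ m := Nat.lt_succ_iff.mp (Finset.mem_range.mp hj)
    rw [add_tsub_cancel_right, Nat.sub_sub_self hj, Nat.choose_symm hj]
  simp only [reflected, finsetSum_coeff, coeff_C_mul_X_pow, Finset.sum_ite_eq, Finset.mem_range,
    Nat.lt_succ_iff]

theorem coeff_of_prod_roots_eq_smul_sum {K : Type*} [Field K] [IsAlgClosed K] {m : ℕ} {p : K[X]}
    (hp : p.Monic) {S : Multiset K}
    (hU : (p.roots.map fun r => (X : K[X]) - C r).prod =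
        (m : K)⁻¹ • (S.map fun s => ((X : K[X]) - C s) ^ m).sum) (n : ℕ) :
    p.coeff n = (m : K)⁻¹ * ((-1) ^ (m - n) * m.choose n * (S.map (· ^ (m - n))).sum) := by
  rw [(IsAlgClosed.splits p).eq_prod_roots_of_monic hp, hU, coeff_smul, smul_eq_mul,
    coeff_multiset_sum_X_sub_C_pow_s4]

theorem boxtimes_eq_u_transform_sum_general (m : ℕ) (p q : ℂ[X])
    (hp : p.Monic) (hq : q.Monic)
    (S T : Multiset ℂ)
    (hUS : (p.roots.map fun r => (X : ℂ[X]) - C r).prod =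
        (m : ℂ)⁻¹ • (S.map fun s => ((X : ℂ[X]) - C s) ^ m).sum)
    (hUT : (q.roots.map fun r => (X : ℂ[X]) - C r).prod =
        (m : ℂ)⁻¹ • (T.map fun t => ((X : ℂ[X]) - C t) ^ m).sum) :
    boxtimes m p q =
      ((m : ℂ) ^ 2)⁻¹ •
        (S.map fun s => (T.map fun t => ((X : ℂ[X]) - C (s * t)) ^ m).sum).sum := by
  have double_sum : (S.map fun s => (T.map fun t => ((X : ℂ[X]) - C (s * t)) ^ m).sum).sum =
      ((S.bind fun s => T.map (s * ·)).map fun u => ((X : ℂ[X]) - C u) ^ m).sum := by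
    simp only [Multiset.map_bind, Multiset.sum_bind, Multiset.map_map, Function.comp_def]
  ext n
  rw [coeff_boxtimes, double_sum, coeff_smul, coeff_multiset_sum_X_sub_C_pow_s4,
    Multiset.sum_map_pow_bind_map_mul, coeff_of_prod_roots_eq_smul_sum hp hUS,
    coeff_of_prod_roots_eq_smul_sum hq hUT, smul_eq_mul]
  split_ifs with hn
  · have hchoose : (m.choose n : ℂ) ≠ 0 := by exact_mod_cast (Nat.choose_pos hn).ne'
    have hsign : ((-1 : ℂ) ^ (m - n)) ^ 2 = 1 := by rw [← pow_mul, mul_comm, pow_mul]; norm_num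
    rw [div_eq_iff hchoose]
    linear_combination ((m : ℂ)⁻¹ ^ 2 * m.choose n ^ 2 * (-1) ^ (m - n) *
      (S.map (· ^ (m - n))).sum * (T.map (· ^ (m - n))).sum) * hsign
  · rw [Nat.choose_eq_zero_of_lt (not_le.mp hn)]
    simp

/-- **Multiplicative convolution via the U transform.**
If `p`, `q` are monic complex polynomials of degree `m` and `S`, `T` are the U transforms
of their root multisets, then `[p ⊠_m q](x) = (1/m²) ∑_{s ∈ S} ∑_{t ∈ T} (x - s·t)^m`. -/
theorem boxtimes_eq_u_transform_sum (m : ℕ) (p q : ℂ[X])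
    (hp : p.Monic) (hq : q.Monic) (hpd : p.natDegree = m) (hqd : q.natDegree = m)
    (S T : Multiset ℂ) (hS : Multiset.card S = m) (hT : Multiset.card T = m)
    (hUS : (p.roots.map fun r => (X : ℂ[X]) - C r).prod =
        (m : ℂ)⁻¹ • (S.map fun s => ((X : ℂ[X]) - C s) ^ m).sum)
    (hUT : (q.roots.map fun r => (X : ℂ[X]) - C r).prod =
        (m : ℂ)⁻¹ • (T.map fun t => ((X : ℂ[X]) - C t) ^ m).sum) :
    boxtimes m p q =
      ((m : ℂ) ^ 2)⁻¹ •
        (S.map fun s => (T.map fun t => ((X : ℂ[X]) - C (s * t)) ^ m).sum).sum :=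
  boxtimes_eq_u_transform_sum_general m p q hp hq S T hUS hUT
end

section
/- Let A be an m×m real diagonal matrix and let B be an m×m real symmetric matrix all of whose diagonal entries are 0. Then the function f(t) = λ_max(A + tB), the largest eigenvalue of A + tB, is monotone nondecreasing for t ≥ 0. -/
/-!
The largest eigenvalue is the maximum of the Rayleigh quotient, so `t ↦ λ_max(A + t B)` is
convex. Since `B` has zero diagonal, testing against the basis vectors gives
`λ_max(A + t B) ≥ max_i A i i = λ_max(A)` for every `t`, so this convex function is minimal at
`t = 0` and hence nondecreasing on `t ≥ 0`.
-/

open Matrix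

variable {n : Type*} [Fintype n] [DecidableEq n]

theorem Matrix.IsDiag.dotProduct_mulVec_le {A : Matrix n n ℝ} (hA : A.IsDiag) {c : ℝ}
    (hc : ∀ i, A i i ≤ c) (x : n → ℝ) : x ⬝ᵥ (A *ᵥ x) ≤ c * (x ⬝ᵥ x) := by
  rw [← hA.diagonal_diag]
  simp only [dotProduct, mulVec_diagonal, diag_apply, Finset.mul_sum]
  exact Finset.sum_le_sum fun i _ => by nlinarith [hc i, mul_self_nonneg (x i)]

namespace Matrix.IsHermitian

variable {M : Matrix n n ℝ} (hM : M.IsHermitian)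

theorem dotProduct_mulVec_le_iSup_eigenvalues_mul (x : n → ℝ) :
    x ⬝ᵥ (M *ᵥ x) ≤ (⨆ i, hM.eigenvalues i) * (x ⬝ᵥ x) := by
  set U : Matrix n n ℝ := ↑hM.eigenvectorUnitary
  have hUUt : U * Uᵀ = 1 := by
    simpa [star_eq_conjTranspose] using Matrix.mem_unitaryGroup_iff.mp hM.eigenvectorUnitary.2
  have hM' : M = U * diagonal hM.eigenvalues * Uᵀ := by
    conv_lhs => rw [hM.spectral_theorem, Unitary.conjStarAlgAut_apply]
    simp [U, star_eq_conjTranspose]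
  have hq : x ⬝ᵥ (M *ᵥ x) = (Uᵀ *ᵥ x) ⬝ᵥ (diagonal hM.eigenvalues *ᵥ (Uᵀ *ᵥ x)) := by
    conv_lhs => rw [hM']
    rw [← mulVec_mulVec, ← mulVec_mulVec, dotProduct_mulVec, ← mulVec_transpose]
  have hx : x ⬝ᵥ x = (Uᵀ *ᵥ x) ⬝ᵥ (Uᵀ *ᵥ x) := by
    rw [dotProduct_mulVec, vecMul_transpose, mulVec_mulVec, hUUt, one_mulVec]
  rw [hq, hx]
  exact (isDiag_diagonal _).dotProduct_mulVec_le
    (fun i => by simpa using le_ciSup (Set.finite_range _).bddAbove i) _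

theorem diag_le_iSup_eigenvalues (i : n) : M i i ≤ ⨆ j, hM.eigenvalues j := by
  simpa using hM.dotProduct_mulVec_le_iSup_eigenvalues_mul (Pi.single i 1)

theorem iSup_eigenvalues_le [Nonempty n] {c : ℝ}
    (h : ∀ x, x ⬝ᵥ (M *ᵥ x) ≤ c * (x ⬝ᵥ x)) : ⨆ i, hM.eigenvalues i ≤ c := by
  refine ciSup_le fun k => ?_
  set v : n → ℝ := ⇑(hM.eigenvectorBasis k)
  have hv : v ⬝ᵥ v = 1 := by
    have h := hM.eigenvectorBasis.inner_eq_one k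
    rwa [EuclideanSpace.inner_eq_star_dotProduct, star_trivial] at h
  simpa [v, hM.mulVec_eigenvectorBasis k, hv] using h v

end Matrix.IsHermitian

theorem lambdaMax_monotone_general (m : ℕ) (A B : Matrix (Fin m) (Fin m) ℝ)
    (hA : A.IsDiag) (hBdiag : ∀ i, B i i = 0)
    (s t : ℝ) (hs : 0 ≤ s) (hst : s ≤ t)
    (hsH : (A + s • B).IsHermitian) (htH : (A + t • B).IsHermitian) :
    (⨆ i, hsH.eigenvalues i) ≤ ⨆ i, htH.eigenvalues i := by
  rcases hst.eq_or_lt with rfl | hlt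
  · exact le_rfl
  rcases isEmpty_or_nonempty (Fin m) with _ | _
  · simp
  set μ := ⨆ i, htH.eigenvalues i
  obtain ⟨i₀, hi₀⟩ := Finite.exists_max fun i => A i i
  have hAi₀ : A i₀ i₀ ≤ μ := by simpa [hBdiag] using htH.diag_le_iSup_eigenvalues i₀
  refine hsH.iSup_eigenvalues_le fun x => le_of_mul_le_mul_left ?_ (hs.trans_lt hlt)
  have hxx : 0 ≤ x ⬝ᵥ x := by simpa using dotProduct_self_star_nonneg x
  have hA_le : x ⬝ᵥ (A *ᵥ x) ≤ μ * (x ⬝ᵥ x) :=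
    (hA.dotProduct_mulVec_le hi₀ x).trans (mul_le_mul_of_nonneg_right hAi₀ hxx)
  have ht_le := htH.dotProduct_mulVec_le_iSup_eigenvalues_mul x
  calc t * (x ⬝ᵥ ((A + s • B) *ᵥ x))
      = (t - s) * (x ⬝ᵥ (A *ᵥ x)) + s * (x ⬝ᵥ ((A + t • B) *ᵥ x)) := by
        simp only [add_mulVec, smul_mulVec, dotProduct_add, dotProduct_smul, smul_eq_mul]
        ring
    _ ≤ (t - s) * (μ * (x ⬝ᵥ x)) + s * (μ * (x ⬝ᵥ x)) := by gcongr
    _ = t * (μ * (x ⬝ᵥ x)) := by ring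

/-- **Monotonicity of the largest eigenvalue.** Let `A` be an `m × m` real diagonal
matrix and `B` an `m × m` real symmetric matrix with zero diagonal. Then
`t ↦ λ_max(A + t B)` is monotone nondecreasing for `t ≥ 0`. -/
theorem lambdaMax_monotone (m : ℕ) (A B : Matrix (Fin m) (Fin m) ℝ)
    (hA : A.IsDiag) (hB : B.IsSymm) (hBdiag : ∀ i, B i i = 0)
    (s t : ℝ) (hs : 0 ≤ s) (hst : s ≤ t)
    (hsH : (A + s • B).IsHermitian) (htH : (A + t • B).IsHermitian) :
    (⨆ i, hsH.eigenvalues i) ≤ ⨆ i, htH.eigenvalues i :=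
  lambdaMax_monotone_general m A B hA hBdiag s t hs hst hsH htH
end
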